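/- arXiv:0804.0677 — 6 statements merged into one kernel-verified Lean document; each statement's English description precedes it below -/
import Mathlib

section
/- Let K be a field of characteristic zero and V a K-vector space. The bilinear operation ≺ on V ⊗ S(V) defined by (v ⊗ ω) ≺ (v' ⊗ 1_K) = v ⊗ (ω ∨ v') and (v ⊗ ω) ≺ (v' ⊗ ω') = 0 whenever ω' has positive symmetric degree, satisfies the Moor-algebra identities: (x ≺ y) ≺ z = (x ≺ z) ≺ y and x ≺ (y ≺ z) = 0 for all x, y, z ∈ V ⊗ S(V). -/
open scoped TensorProduct

/-- The relation on the tensor algebra whose quotient is the symmetric algebra `S(V)`. -/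
inductive SymRel (K : Type*) [CommRing K] (V : Type*) [AddCommGroup V] [Module K V] :
    TensorAlgebra K V → TensorAlgebra K V → Prop
  | comm (x y : V) : SymRel K V (TensorAlgebra.ι K x * TensorAlgebra.ι K y)
      (TensorAlgebra.ι K y * TensorAlgebra.ι K x)

/-- The symmetric algebra `S(V)` (as a `K`-module, the symmetric module). -/
abbrev SymmAlg (K : Type*) [CommRing K] (V : Type*) [AddCommGroup V] [Module K V] : Type _ :=
  RingQuot (SymRel K V)

/-- The canonical linear embedding `V → S(V)`, `v ↦ v` (degree one part). -/
noncomputable def symI (K : Type*) [CommRing K] (V : Type*) [AddCommGroup V] [Module K V] :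
    V →ₗ[K] SymmAlg K V :=
  (RingQuot.mkAlgHom K (SymRel K V)).toLinearMap ∘ₗ TensorAlgebra.ι K

section Aux
variable (K : Type*) [CommRing K] (V : Type*) [AddCommGroup V] [Module K V]

noncomputable def symEps : SymmAlg K V →ₐ[K] K :=
  RingQuot.liftAlgHom K ⟨TensorAlgebra.lift K (0 : V →ₗ[K] K), by
    rintro x y ⟨a, b⟩
    simp⟩

lemma symEps_symI (v : V) : symEps K V (symI K V v) = 0 := by
  simp [symI, symEps, RingQuot.liftAlgHom_mkAlgHom_apply]

lemma symI_comm (v w : V) : symI K V v * symI K V w = symI K V w * symI K V v := by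
  have := RingQuot.mkAlgHom_rel K (SymRel.comm (K := K) v w)
  simpa [symI, map_mul] using this

noncomputable def Hb : V →ₗ[K] SymmAlg K V →ₗ[K] SymmAlg K V →ₗ[K] SymmAlg K V :=
  LinearMap.mk₂ K
    (fun v' ω' => symEps K V ω' • (LinearMap.mul K (SymmAlg K V)).flip (symI K V v'))
    (fun m₁ m₂ n => by rw [map_add, map_add, smul_add])
    (fun c m n => by rw [map_smul, map_smul, smul_comm])
    (fun m n₁ n₂ => by rw [map_add, add_smul])
    (fun c m n => by rw [map_smul, smul_eq_mul, mul_smul])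

noncomputable def precMap : (V ⊗[K] SymmAlg K V) →ₗ[K] (V ⊗[K] SymmAlg K V) →ₗ[K]
    (V ⊗[K] SymmAlg K V) :=
  ((LinearMap.lTensorHom (R := K) V).comp (TensorProduct.lift (Hb K V))).flip

lemma precMap_apply (x : V ⊗[K] SymmAlg K V) (v' : V) (ω' : SymmAlg K V) :
    precMap K V x (v' ⊗ₜ[K] ω') =
      symEps K V ω' •
        LinearMap.lTensor V ((LinearMap.mul K (SymmAlg K V)).flip (symI K V v')) x := by
  simp [precMap, Hb, TensorProduct.lift.tmul, LinearMap.lTensorHom]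

lemma precMap_tmul (v : V) (ω : SymmAlg K V) (v' : V) (ω' : SymmAlg K V) :
    precMap K V (v ⊗ₜ[K] ω) (v' ⊗ₜ[K] ω') =
      symEps K V ω' • (v ⊗ₜ[K] (ω * symI K V v')) := by
  simp [precMap_apply]

end Aux

lemma flipMul_comm (K : Type*) [CommRing K] (V : Type*) [AddCommGroup V] [Module K V]
    (a b : V) :
    ((LinearMap.mul K (SymmAlg K V)).flip (symI K V a)).comp
        ((LinearMap.mul K (SymmAlg K V)).flip (symI K V b)) =
      ((LinearMap.mul K (SymmAlg K V)).flip (symI K V b)).comp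
        ((LinearMap.mul K (SymmAlg K V)).flip (symI K V a)) := by
  ext ω
  simp only [LinearMap.comp_apply, LinearMap.flip_apply, LinearMap.mul_apply', mul_assoc]
  rw [symI_comm]


/-- A rigidity theorem for Moor bialgebras, Theorem 2.1 (part): the operation `≺` on
`V ⊗ S(V)` given by `(v ⊗ ω) ≺ (v' ⊗ 1) = v ⊗ (ω ∨ v')`, and `(v ⊗ ω) ≺ (v' ⊗ ω') = 0` when
`ω'` has positive symmetric degree, satisfies the Moor-algebra identities. -/
theorem stmt0 (K : Type*) [Field K] [CharZero K] (V : Type*) [AddCommGroup V] [Module K V] :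
    ∃ prec : (V ⊗[K] SymmAlg K V) →ₗ[K] (V ⊗[K] SymmAlg K V) →ₗ[K] (V ⊗[K] SymmAlg K V),
      (∀ (v v' : V) (ω : SymmAlg K V),
          prec (v ⊗ₜ[K] ω) (v' ⊗ₜ[K] (1 : SymmAlg K V)) = v ⊗ₜ[K] (ω * symI K V v')) ∧
      (∀ (v v' w : V) (ω ω' : SymmAlg K V),
          prec (v ⊗ₜ[K] ω) (v' ⊗ₜ[K] (symI K V w * ω')) = 0) ∧
      (∀ x y z : V ⊗[K] SymmAlg K V, prec (prec x y) z = prec (prec x z) y) ∧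
      (∀ x y z : V ⊗[K] SymmAlg K V, prec x (prec y z) = 0) := by
  refine ⟨precMap K V, ?_, ?_, ?_, ?_⟩
  · intro v v' ω
    simp [precMap_tmul]
  · intro v v' w ω ω'
    rw [precMap_tmul, map_mul, symEps_symI, zero_mul, zero_smul]
  · intro x y z
    induction y using TensorProduct.induction_on generalizing z with
    | zero => simp
    | add a b ha hb => simp [map_add, LinearMap.add_apply, ha, hb]
    | tmul v1 ω1 =>
      induction z using TensorProduct.induction_on with
      | zero => simp
      | add a b ha hb => simp [map_add, ha, hb]
      | tmul v2 ω2 =>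
        simp only [precMap_apply, map_smul, LinearMap.smul_apply]
        rw [smul_comm]
        congr 1
        congr 1
        rw [← LinearMap.comp_apply, ← LinearMap.lTensor_comp, flipMul_comm,
          LinearMap.lTensor_comp, LinearMap.comp_apply]
  · intro x y z
    induction y using TensorProduct.induction_on generalizing z with
    | zero => simp
    | add a b ha hb => simp [map_add, LinearMap.add_apply, ha, hb]
    | tmul v1 ω1 =>
      induction z using TensorProduct.induction_on with
      | zero => simp
      | add a b ha hb => simp [map_add, ha, hb]
      | tmul v2 ω2 =>
        rw [precMap_tmul, map_smul, precMap_apply, map_mul, symEps_symI, mul_zero,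
          zero_smul, smul_zero]
end

section
/- Let K be a field of characteristic zero, V a K-vector space, (A, ≺_A) a Moor-algebra, and f : V → A a linear map. Then there exists a unique morphism of Moor-algebras f̃ : V ⊗ S(V) → A such that f̃(v ⊗ 1_K) = f(v) for all v ∈ V; it is given by f̃(v ⊗ v_1 ∨ ... ∨ v_p) = (...((f(v) ≺_A f(v_1)) ≺_A f(v_2)) ... ) ≺_A f(v_p). Hence V ⊗ S(V), with the operation (v ⊗ ω) ≺ (v' ⊗ 1_K) = v ⊗ (ω ∨ v') and (v ⊗ ω) ≺ (v' ⊗ ω') = 0 for ω' of positive degree, is the free Moor-algebra over V. -/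
open scoped TensorProduct

/-- Theorem 2.1 (2): `V ⊗ S(V)`, with `(v ⊗ ω) ≺ (v' ⊗ 1) = v ⊗ (ω ∨ v')` and
`(v ⊗ ω) ≺ (v' ⊗ ω') = 0` for `ω'` of positive degree, is the free Moor-algebra over `V`:
for every Moor-algebra `A` and linear map `f : V → A` there is a unique morphism of
Moor-algebras `F : V ⊗ S(V) → A` with `F (v ⊗ 1) = f v`, and it is given on left combs by
`F (v ⊗ v₁ ∨ … ∨ vₚ) = (…((f v ≺ f v₁) ≺ f v₂)…) ≺ f vₚ`. -/
theorem stmt1 (K : Type*) [Field K] [CharZero K] (V : Type*) [AddCommGroup V] [Module K V]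
    (prec : (V ⊗[K] SymmAlg K V) →ₗ[K] (V ⊗[K] SymmAlg K V) →ₗ[K] (V ⊗[K] SymmAlg K V))
    (hprec₁ : ∀ (v v' : V) (ω : SymmAlg K V),
      prec (v ⊗ₜ[K] ω) (v' ⊗ₜ[K] (1 : SymmAlg K V)) = v ⊗ₜ[K] (ω * symI K V v'))
    (hprec₂ : ∀ (v v' w : V) (ω ω' : SymmAlg K V),
      prec (v ⊗ₜ[K] ω) (v' ⊗ₜ[K] (symI K V w * ω')) = 0)
    (A : Type*) [AddCommGroup A] [Module K A] (precA : A →ₗ[K] A →ₗ[K] A)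
    (hA₁ : ∀ x y z : A, precA (precA x y) z = precA (precA x z) y)
    (hA₂ : ∀ x y z : A, precA x (precA y z) = 0)
    (f : V →ₗ[K] A) :
    ∃ F : (V ⊗[K] SymmAlg K V) →ₗ[K] A,
      ((∀ v : V, F (v ⊗ₜ[K] (1 : SymmAlg K V)) = f v) ∧
        (∀ x y : V ⊗[K] SymmAlg K V, F (prec x y) = precA (F x) (F y)) ∧
        (∀ (v : V) (l : List V),
          F (v ⊗ₜ[K] (l.map (symI K V)).prod)
            = l.foldl (fun a w => precA a (f w)) (f v))) ∧
      ∀ G : (V ⊗[K] SymmAlg K V) →ₗ[K] A,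
        ((∀ v : V, G (v ⊗ₜ[K] (1 : SymmAlg K V)) = f v) ∧
          (∀ x y : V ⊗[K] SymmAlg K V, G (prec x y) = precA (G x) (G y))) → G = F := by
  classical
  let R : V →ₗ[K] Module.End K A := precA.flip ∘ₗ f
  have hRapp : ∀ (v : V) (a : A), R v a = precA a (f v) := fun v a => rfl
  have hcommR : ∀ x y : V, R x * R y = R y * R x := by
    intro x y; ext a
    simp only [Module.End.mul_apply, hRapp]
    exact hA₁ a (f y) (f x)
  let φ : TensorAlgebra K V →ₐ[K] Module.End K A := TensorAlgebra.lift K R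
  have hφι : ∀ v : V, φ (TensorAlgebra.ι K v) = R v := fun v =>
    TensorAlgebra.lift_ι_apply R v
  have hφrel : ∀ ⦃x y⦄, SymRel K V x y → φ x = φ y := by
    intro x y h
    cases h with
    | comm a b =>
      simp only [map_mul, hφι]
      exact hcommR a b
  let ψ : SymmAlg K V →ₐ[K] Module.End K A := RingQuot.liftAlgHom K ⟨φ, hφrel⟩
  have hψI : ∀ v : V, ψ (symI K V v) = R v := by
    intro v
    show ψ (RingQuot.mkAlgHom K (SymRel K V) (TensorAlgebra.ι K v)) = R v
    rw [RingQuot.liftAlgHom_mkAlgHom_apply]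
    exact hφι v
  have hfold_comm : ∀ (l : List V) (a b : A),
      List.foldl (fun a w => precA a (f w)) (precA a b) l
        = precA (List.foldl (fun a w => precA a (f w)) a l) b := by
    intro l
    induction l with
    | nil => intro a b; rfl
    | cons u l ih =>
      intro a b
      simp only [List.foldl_cons]
      rw [hA₁ a b (f u), ih]
  have hψprod : ∀ (l : List V) (a : A),
      ψ ((l.map (symI K V)).prod) a = List.foldl (fun a w => precA a (f w)) a l := by
    intro l
    induction l with
    | nil => intro a; simp
    | cons w l ih =>
      intro a
      simp only [List.map_cons, List.prod_cons, map_mul, Module.End.mul_apply, hψI, hRapp, ih,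
        List.foldl_cons]
      rw [hfold_comm]
  let s : Set (SymmAlg K V) := {x | ∃ l : List V, (l.map (symI K V)).prod = x}
  have hsmul : ∀ x ∈ s, ∀ y ∈ s, x * y ∈ s := by
    rintro _ ⟨l₁, rfl⟩ _ ⟨l₂, rfl⟩
    exact ⟨l₁ ++ l₂, by simp⟩
  have hspanmul : ∀ a ∈ Submodule.span K s, ∀ b ∈ Submodule.span K s,
      a * b ∈ Submodule.span K s := by
    intro a ha b hb
    have h1 : a * b ∈ Submodule.span K s * Submodule.span K s :=
      Submodule.mul_mem_mul ha hb
    rw [Submodule.span_mul_span] at h1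
    refine Submodule.span_le.mpr ?_ h1
    rintro z hz
    rw [Set.mem_mul] at hz
    obtain ⟨x, hx, y, hy, rfl⟩ := hz
    exact Submodule.subset_span (hsmul x hx y hy)
  have hspan : ∀ ω : SymmAlg K V, ω ∈ Submodule.span K s := by
    intro ω
    obtain ⟨t, rfl⟩ := RingQuot.mkAlgHom_surjective K (SymRel K V) ω
    induction t using TensorAlgebra.induction with
    | algebraMap r =>
      rw [AlgHom.commutes]
      have : (algebraMap K (SymmAlg K V)) r = r • (1 : SymmAlg K V) := by
        rw [Algebra.algebraMap_eq_smul_one]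
      rw [this]
      exact Submodule.smul_mem _ r (Submodule.subset_span ⟨[], by simp⟩)
    | ι v => exact Submodule.subset_span ⟨[v], by simp [symI]⟩
    | mul x y hx hy => rw [map_mul]; exact hspanmul _ hx _ hy
    | add x y hx hy => rw [map_add]; exact add_mem hx hy
  let χ : SymmAlg K V →ₗ[K] A →ₗ[K] A := ψ.toLinearMap
  let F : (V ⊗[K] SymmAlg K V) →ₗ[K] A := TensorProduct.lift (χ.flip ∘ₗ f)
  have hF : ∀ (v : V) (ω : SymmAlg K V), F (v ⊗ₜ[K] ω) = ψ ω (f v) := fun v ω => rfl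
  have hF1 : ∀ v : V, F (v ⊗ₜ[K] (1 : SymmAlg K V)) = f v := by
    intro v; rw [hF, map_one]; rfl
  have hψcomm : ∀ (ω : SymmAlg K V) (a b : A), ψ ω (precA a b) = precA (ψ ω a) b := by
    intro ω a b
    induction hspan ω using Submodule.span_induction with
    | mem x hx =>
      obtain ⟨l, rfl⟩ := hx
      rw [hψprod, hψprod, hfold_comm]
    | zero => simp
    | add x y hx hy ihx ihy =>
      simp only [map_add, LinearMap.add_apply, ihx, ihy]
    | smul c x hx ih =>
      simp only [map_smul, LinearMap.smul_apply, ih, LinearMap.map_smul]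
  have hFmul : ∀ x y : V ⊗[K] SymmAlg K V, F (prec x y) = precA (F x) (F y) := by
    intro x y
    induction x using TensorProduct.induction_on with
    | zero => simp
    | add x₁ x₂ h₁ h₂ =>
      simp only [map_add, LinearMap.add_apply, h₁, h₂]
    | tmul v ω =>
      induction y using TensorProduct.induction_on with
      | zero => simp
      | add y₁ y₂ h₁ h₂ =>
        simp only [map_add, LinearMap.add_apply, h₁, h₂, LinearMap.map_add]
      | tmul v' ω' =>
        induction hspan ω' using Submodule.span_induction with
        | mem x hx =>
          obtain ⟨l, rfl⟩ := hx
          cases l with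
          | nil =>
            simp only [List.map_nil, List.prod_nil]
            rw [hprec₁, hF, hF, hF1, map_mul, Module.End.mul_apply, hψI, hRapp]
            exact hψcomm ω (f v) (f v')
          | cons w l' =>
            simp only [List.map_cons, List.prod_cons]
            rw [hprec₂, map_zero, hF, hF, map_mul, Module.End.mul_apply, hψI, hRapp]
            exact (hA₂ _ _ _).symm
        | zero =>
          rw [TensorProduct.tmul_zero]
          simp
        | add a b ha hb iha ihb =>
          rw [TensorProduct.tmul_add, map_add, map_add, map_add, iha, ihb, LinearMap.map_add]
        | smul c a ha ih =>
          rw [TensorProduct.tmul_smul, map_smul, map_smul, map_smul, ih, LinearMap.map_smul]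
  have hF3 : ∀ (v : V) (l : List V),
      F (v ⊗ₜ[K] (l.map (symI K V)).prod) = l.foldl (fun a w => precA a (f w)) (f v) := by
    intro v l
    rw [hF, hψprod]
  refine ⟨F, ⟨hF1, hFmul, hF3⟩, ?_⟩
  rintro G ⟨hG1, hG2⟩
  have key : ∀ (l : List V) (v : V),
      G (v ⊗ₜ[K] ((l.map (symI K V)).prod)) = F (v ⊗ₜ[K] ((l.map (symI K V)).prod)) := by
    intro l
    induction l using List.reverseRecOn with
    | nil =>
      intro v
      simp only [List.map_nil, List.prod_nil]
      rw [hG1, hF1]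
    | append_singleton l w ih =>
      intro v
      have hmono : (((l ++ [w]).map (symI K V)).prod)
          = ((l.map (symI K V)).prod) * symI K V w := by simp
      rw [hmono, ← hprec₁, hG2, hFmul, ih, hG1, hF1]
  apply TensorProduct.ext'
  intro v ω
  induction hspan ω using Submodule.span_induction with
  | mem x hx =>
    obtain ⟨l, rfl⟩ := hx
    exact key l v
  | zero => simp
  | add a b ha hb iha ihb =>
    rw [TensorProduct.tmul_add, map_add, map_add, iha, ihb]
  | smul c a ha ih =>
    rw [TensorProduct.tmul_smul, map_smul, map_smul, ih]
end

section
/- Let H be a K-vector space and Δ : H → H ⊗ H a linear map such that Δ^{(2)} = (id ⊗ τ)Δ^{(2)}, where Δ^{(2)} := (Δ ⊗ id)Δ and τ is the flip map. Define Δ^{(1)} := Δ and Δ^{(n)} := (Δ ⊗ id^{⊗(n-1)})Δ^{(n-1)} : H → H^{⊗(n+1)} for n > 1. Then for every n > 0 and every permutation σ ∈ Σ_n, Δ^{(n)} is invariant under the permutation of its last n tensor components (all components except the first) induced by σ: (id_H ⊗ P_σ) ∘ Δ^{(n)} = Δ^{(n)}, where P_σ : H^{⊗n} → H^{⊗n}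 permutes the tensor factors according to σ. -/
open scoped TensorProduct

section PT

variable (K : Type*) [CommSemiring K] (H : Type*) [AddCommMonoid H] [Module K H]

/-- The `n`-fold tensor power `H^{⊗n}`. -/
abbrev PT (n : ℕ) : Type _ := PiTensorProduct K (fun _ : Fin n => H)

/-- The canonical identification `H ≃ H^{⊗1}`. -/
noncomputable def pt1 : H ≃ₗ[K] PT K H 1 :=
  (PiTensorProduct.subsingletonEquiv (s := fun _ : Fin 1 => H) (0 : Fin 1)).symm

/-- Splitting off the first tensor factor: `H^{⊗(n+1)} ≃ H ⊗ H^{⊗n}`. -/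
noncomputable def ptSplit (n : ℕ) : PT K H (n + 1) ≃ₗ[K] H ⊗[K] PT K H n :=
  ((PiTensorProduct.reindex K (fun _ : Fin (n + 1) => H)
      (((finCongr (Nat.add_comm n 1))).trans finSumFinEquiv.symm)).trans
    (PiTensorProduct.tmulEquiv K H).symm).trans
      (TensorProduct.congr (pt1 K H).symm (LinearEquiv.refl K _))

/-- The canonical identification `H ⊗ H ≃ H^{⊗2}`. -/
noncomputable def pt2 : H ⊗[K] H ≃ₗ[K] PT K H 2 :=
  ((TensorProduct.congr (pt1 K H) (pt1 K H)).trans (PiTensorProduct.tmulEquiv K H)).trans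
    (PiTensorProduct.reindex K (fun _ : Fin 1 ⊕ Fin 1 => H) finSumFinEquiv)

/-- Merging a two-fold factor in front: `(H ⊗ H) ⊗ H^{⊗n} ≃ H^{⊗(n+2)}`. -/
noncomputable def ptMerge (n : ℕ) : (H ⊗[K] H) ⊗[K] PT K H n ≃ₗ[K] PT K H (n + 2) :=
  ((TensorProduct.congr (pt2 K H) (LinearEquiv.refl K _)).trans
    (PiTensorProduct.tmulEquiv K H)).trans
      (PiTensorProduct.reindex K (fun _ : Fin 2 ⊕ Fin n => H)
        (finSumFinEquiv.trans (finCongr (by omega))))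

variable {K H}

/-- `Δ ⊗ id^{⊗n}`: apply `Δ : H → H ⊗ H` to the first factor of `H^{⊗(n+1)}`. -/
noncomputable def firstDelta (Δ : H →ₗ[K] H ⊗[K] H) (n : ℕ) :
    PT K H (n + 1) →ₗ[K] PT K H (n + 2) :=
  (ptMerge K H n).toLinearMap ∘ₗ
    (TensorProduct.map Δ LinearMap.id) ∘ₗ (ptSplit K H n).toLinearMap

/-- The iterated cooperation `Δ^{(n)} : H → H^{⊗(n+1)}`:
`Δ^{(0)} = id`, `Δ^{(1)} = Δ` and `Δ^{(n)} = (Δ ⊗ id^{⊗(n-1)}) ∘ Δ^{(n-1)}`. -/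
noncomputable def DIter (Δ : H →ₗ[K] H ⊗[K] H) : ∀ n : ℕ, H →ₗ[K] PT K H (n + 1)
  | 0 => (pt1 K H).toLinearMap
  | n + 1 => firstDelta Δ n ∘ₗ DIter Δ n

end PT

/-- Extension of a permutation `σ` of `{1,…,n}` to the permutation of `{0,1,…,n}` fixing `0`
and acting by `σ` on the last `n` elements. -/
def extendPerm {n : ℕ} (σ : Equiv.Perm (Fin n)) : Equiv.Perm (Fin (n + 1)) :=
  (finCongr (Nat.add_comm 1 n)).permCongr
    (finSumFinEquiv.symm.trans ((Equiv.sumCongr (Equiv.refl (Fin 1)) σ).trans finSumFinEquiv))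

section ExtendPerm

open Equiv

@[simp] theorem extendPerm_zero {n : ℕ} (σ : Equiv.Perm (Fin n)) : extendPerm σ 0 = 0 := by
  simp only [extendPerm, Equiv.permCongr_apply, Equiv.trans_apply, finCongr_apply]
  have h0 : (Fin.cast (Nat.add_comm 1 n).symm (0 : Fin (n+1))) = Fin.castAdd n (0 : Fin 1) := by
    ext; simp
  rw [show (finCongr (Nat.add_comm 1 n)).symm (0 : Fin (n+1)) = Fin.castAdd n (0 : Fin 1) from h0]
  rw [finSumFinEquiv_symm_apply_castAdd]
  simp [Fin.ext_iff]

@[simp] theorem extendPerm_succ {n : ℕ} (σ : Equiv.Perm (Fin n)) (i : Fin n) :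
    extendPerm σ i.succ = (σ i).succ := by
  simp only [extendPerm, Equiv.permCongr_apply, Equiv.trans_apply, finCongr_apply]
  have h0 : (Fin.cast (Nat.add_comm 1 n).symm (i.succ : Fin (n+1))) = Fin.natAdd 1 i := by
    ext; simp [Nat.add_comm]
  rw [show (finCongr (Nat.add_comm 1 n)).symm i.succ = Fin.natAdd 1 i from h0]
  rw [finSumFinEquiv_symm_apply_natAdd]
  simp [Fin.ext_iff, Nat.add_comm]
@[simp] theorem extendPerm_one {n : ℕ} : extendPerm (1 : Equiv.Perm (Fin n)) = 1 := by
  ext x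
  induction x using Fin.cases <;> simp [Equiv.Perm.one_apply]

theorem extendPerm_mul {n : ℕ} (a b : Equiv.Perm (Fin n)) :
    extendPerm (a * b) = extendPerm a * extendPerm b := by
  ext x
  induction x using Fin.cases <;> simp [Equiv.Perm.mul_apply]

theorem extendPerm_symm {n : ℕ} (σ : Equiv.Perm (Fin n)) :
    (extendPerm σ).symm = extendPerm σ.symm := by
  apply Equiv.ext; intro x
  rw [Equiv.symm_apply_eq]
  induction x using Fin.cases <;> simp

theorem extendPerm_swap {n : ℕ} (a b : Fin n) :
    extendPerm (Equiv.swap a b) = Equiv.swap a.succ b.succ := by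
  apply Equiv.ext; intro x
  induction x using Fin.cases with
  | zero =>
    rw [extendPerm_zero, Equiv.swap_apply_of_ne_of_ne (Fin.succ_ne_zero a).symm
      (Fin.succ_ne_zero b).symm]
  | succ i =>
    rw [extendPerm_succ]
    rcases eq_or_ne i a with rfl | ha
    · simp
    rcases eq_or_ne i b with rfl | hb
    · simp
    rw [Equiv.swap_apply_of_ne_of_ne ha hb,
      Equiv.swap_apply_of_ne_of_ne (fun h => ha (Fin.succ_injective _ h))
        (fun h => hb (Fin.succ_injective _ h))]
section Comp

open TensorProduct PiTensorProduct

variable {K : Type*} [CommSemiring K] {H : Type*} [AddCommMonoid H] [Module K H]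

theorem pt1_apply (x : H) : pt1 K H x = tprod K (fun _ : Fin 1 => x) := by
  rw [pt1, LinearEquiv.symm_apply_eq, subsingletonEquiv_apply_tprod]

theorem ptSplit_tprod {n : ℕ} (f : Fin (n+1) → H) :
    ptSplit K H n (tprod K f) = f 0 ⊗ₜ[K] tprod K (fun i => f i.succ) := by
  rw [ptSplit]
  simp only [LinearEquiv.trans_apply, reindex_tprod]
  have hfun : ((tprod K (s := fun _ : Fin 1 ⊕ Fin n => H)) fun i =>
      f (((finCongr (Nat.add_comm n 1)).trans finSumFinEquiv.symm).symm i))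
      = tprod K (fun i => (Sum.elim (fun _ : Fin 1 => f 0)
        (fun i : Fin n => f i.succ)) i) := by
    congr 1
    funext i
    cases i with
    | inl j =>
      simp only [Equiv.symm_trans_apply, Equiv.symm_symm, finCongr_apply, Sum.elim_inl]
      congr 1
      ext
      simp [Fin.ext_iff, Subsingleton.elim j 0]
    | inr j =>
      simp only [Equiv.symm_trans_apply, Equiv.symm_symm, finCongr_apply, Sum.elim_inr]
      congr 1
      ext
      simp [Fin.ext_iff, Nat.add_comm]
  rw [hfun, tmulEquiv_symm_apply]
  simp [TensorProduct.congr, pt1]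

end Comp
section Comp2

open TensorProduct PiTensorProduct

variable {K : Type*} [CommSemiring K] {H : Type*} [AddCommMonoid H] [Module K H]

theorem ptSplit_symm_tmul {n : ℕ} (x : H) (f : Fin n → H) :
    (ptSplit K H n).symm (x ⊗ₜ[K] tprod K f) = PiTensorProduct.tprod K (Fin.cons x f) := by
  rw [LinearEquiv.symm_apply_eq, ptSplit_tprod]
  simp

theorem pt2_tmul (x y : H) :
    pt2 K H (x ⊗ₜ[K] y) = tprod K (fun i : Fin 2 => if i = 0 then x else y) := by
  rw [pt2]
  simp only [LinearEquiv.trans_apply, TensorProduct.congr_tmul, pt1_apply,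
    LinearEquiv.refl_apply, tmulEquiv_apply, reindex_tprod]
  congr 1
  funext i
  match i with
  | ⟨0, h0⟩ =>
    have h1 : (finSumFinEquiv.symm ((⟨0, h0⟩ : Fin 2) : Fin (1+1)) : Fin 1 ⊕ Fin 1)
        = Sum.inl (0 : Fin 1) := by
      rw [Equiv.symm_apply_eq]; rfl
    rw [h1]; rfl
  | ⟨1, h0⟩ =>
    have h1 : (finSumFinEquiv.symm ((⟨1, h0⟩ : Fin 2) : Fin (1+1)) : Fin 1 ⊕ Fin 1)
        = Sum.inr (0 : Fin 1) := by
      rw [Equiv.symm_apply_eq]; rfl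
    rw [h1]; rfl

theorem ptMerge_tmul {n : ℕ} (x y : H) (f : Fin n → H) :
    ptMerge K H n ((x ⊗ₜ[K] y) ⊗ₜ[K] tprod K f) = PiTensorProduct.tprod K (Fin.cons x (Fin.cons y f)) := by
  rw [ptMerge]
  simp only [LinearEquiv.trans_apply, TensorProduct.congr_tmul, pt2_tmul,
    LinearEquiv.refl_apply, tmulEquiv_apply, reindex_tprod]
  congr 1
  funext i
  simp only [Equiv.symm_trans_apply, finCongr_symm, finCongr_apply]
  rcases i with ⟨iv, hi⟩
  match iv, hi with
  | 0, hi =>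
    have h1 : (finSumFinEquiv.symm ((Fin.cast (by omega) (⟨0, hi⟩ : Fin (n+2))) : Fin (2+n))
        : Fin 2 ⊕ Fin n) = Sum.inl (0 : Fin 2) := by
      rw [Equiv.symm_apply_eq]; rfl
    rw [h1]; rfl
  | 1, hi =>
    have h1 : (finSumFinEquiv.symm ((Fin.cast (by omega) (⟨1, hi⟩ : Fin (n+2))) : Fin (2+n))
        : Fin 2 ⊕ Fin n) = Sum.inl (1 : Fin 2) := by
      rw [Equiv.symm_apply_eq]; rfl
    rw [h1]; rfl
  | (k+2), hi =>
    have h1 : (finSumFinEquiv.symm ((Fin.cast (by omega) (⟨k+2, hi⟩ : Fin (n+2))) : Fin (2+n))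
        : Fin 2 ⊕ Fin n) = Sum.inr (⟨k, by omega⟩ : Fin n) := by
      rw [Equiv.symm_apply_eq]
      ext; simp [Nat.add_comm]
    rw [h1]
    simp only [Sum.elim_inr]
    have h2 : (⟨k+2, hi⟩ : Fin (n+2)) = (⟨k, by omega⟩ : Fin n).succ.succ := by
      ext; simp
    rw [h2, Fin.cons_succ, Fin.cons_succ]

end Comp2
section MapLemmas

open TensorProduct PiTensorProduct

variable {K : Type*} [CommSemiring K] {H : Type*} [AddCommMonoid H] [Module K H]

theorem reindex_split_symm {n : ℕ} (ρ : Equiv.Perm (Fin n)) :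
    (PiTensorProduct.reindex K (fun _ : Fin (n+1) => H) (extendPerm ρ)).toLinearMap ∘ₗ
      (ptSplit K H n).symm.toLinearMap
    = (ptSplit K H n).symm.toLinearMap ∘ₗ
      TensorProduct.map LinearMap.id
        (PiTensorProduct.reindex K (fun _ : Fin n => H) ρ).toLinearMap := by
  ext x f
  show (PiTensorProduct.reindex K (fun _ : Fin (n+1) => H) (extendPerm ρ))
      ((ptSplit K H n).symm (x ⊗ₜ[K] tprod K f))
    = (ptSplit K H n).symm (x ⊗ₜ[K] (PiTensorProduct.reindex K (fun _ : Fin n => H) ρ)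
        (tprod K f))
  rw [ptSplit_symm_tmul, reindex_tprod, reindex_tprod, ptSplit_symm_tmul]
  congr 1
  funext j
  induction j using Fin.cases with
  | zero => rw [extendPerm_symm, extendPerm_zero, Fin.cons_zero, Fin.cons_zero]
  | succ i => rw [extendPerm_symm, extendPerm_succ, Fin.cons_succ, Fin.cons_succ]

end MapLemmas
section MapLemmas2

open TensorProduct PiTensorProduct

variable {K : Type*} [CommSemiring K] {H : Type*} [AddCommMonoid H] [Module K H]

theorem ptMerge_eq (n : ℕ) :
    (ptMerge K H n).toLinearMap
    = (ptSplit K H (n+1)).symm.toLinearMap ∘ₗ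
      (TensorProduct.map LinearMap.id (ptSplit K H n).symm.toLinearMap) ∘ₗ
      (TensorProduct.assoc K H H (PT K H n)).toLinearMap := by
  ext x y f
  show ptMerge K H n ((x ⊗ₜ[K] y) ⊗ₜ[K] tprod K f)
    = (ptSplit K H (n+1)).symm ((TensorProduct.map LinearMap.id
        (ptSplit K H n).symm.toLinearMap) ((TensorProduct.assoc K H H (PT K H n))
          ((x ⊗ₜ[K] y) ⊗ₜ[K] tprod K f)))
  rw [ptMerge_tmul, TensorProduct.assoc_tmul, TensorProduct.map_tmul]
  simp only [LinearMap.id_coe, id_eq, LinearEquiv.coe_coe]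
  rw [ptSplit_symm_tmul, ptSplit_symm_tmul]

theorem firstDelta_eq (Δ : H →ₗ[K] H ⊗[K] H) (n : ℕ) :
    firstDelta Δ n
    = (ptSplit K H (n+1)).symm.toLinearMap ∘ₗ
      (TensorProduct.map LinearMap.id (ptSplit K H n).symm.toLinearMap) ∘ₗ
      (TensorProduct.assoc K H H (PT K H n)).toLinearMap ∘ₗ
      (TensorProduct.map Δ LinearMap.id) ∘ₗ (ptSplit K H n).toLinearMap := by
  rw [firstDelta, ptMerge_eq]
  rfl

end MapLemmas2
section Defs

open TensorProduct PiTensorProduct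

variable {K : Type*} [CommSemiring K] {H : Type*} [AddCommMonoid H] [Module K H]

/-- `(Δ ⊗ id) ∘ Δ`, associated as `H → H ⊗ (H ⊗ H)`. -/
noncomputable def assocDelta (Δ : H →ₗ[K] H ⊗[K] H) : H →ₗ[K] H ⊗[K] (H ⊗[K] H) :=
  (TensorProduct.assoc K H H H).toLinearMap ∘ₗ TensorProduct.map Δ LinearMap.id ∘ₗ Δ

variable (K H) in
/-- Swap the first two factors of `H ⊗ (H ⊗ P)`. -/
noncomputable def swapF (P : Type*) [AddCommMonoid P] [Module K P] :
    H ⊗[K] (H ⊗[K] P) ≃ₗ[K] H ⊗[K] (H ⊗[K] P) :=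
  (TensorProduct.assoc K H H P).symm.trans
    ((TensorProduct.congr (TensorProduct.comm K H H) (LinearEquiv.refl K P)).trans
      (TensorProduct.assoc K H H P))

@[simp] theorem swapF_tmul {P : Type*} [AddCommMonoid P] [Module K P] (x y : H) (p : P) :
    swapF K H P (x ⊗ₜ[K] (y ⊗ₜ[K] p)) = y ⊗ₜ[K] (x ⊗ₜ[K] p) := by
  simp [swapF]

variable (K H) in
/-- Reassociation `(H ⊗ (H ⊗ H)) ⊗ P ≃ H ⊗ (H ⊗ (H ⊗ P))`. -/
noncomputable def alphaE (P : Type*) [AddCommMonoid P] [Module K P] :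
    (H ⊗[K] (H ⊗[K] H)) ⊗[K] P ≃ₗ[K] H ⊗[K] (H ⊗[K] (H ⊗[K] P)) :=
  (TensorProduct.assoc K H (H ⊗[K] H) P).trans
    (TensorProduct.congr (LinearEquiv.refl K H) (TensorProduct.assoc K H H P))

@[simp] theorem alphaE_tmul {P : Type*} [AddCommMonoid P] [Module K P] (x y z : H) (p : P) :
    alphaE K H P ((x ⊗ₜ[K] (y ⊗ₜ[K] z)) ⊗ₜ[K] p) = x ⊗ₜ[K] (y ⊗ₜ[K] (z ⊗ₜ[K] p)) := by
  simp [alphaE]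

/-- The double application of `Δ` to the first factor, in fully split form. -/
noncomputable def xiMap (Δ : H →ₗ[K] H ⊗[K] H) (P : Type*) [AddCommMonoid P] [Module K P] :
    H ⊗[K] P →ₗ[K] H ⊗[K] (H ⊗[K] (H ⊗[K] P)) :=
  (TensorProduct.assoc K H H (H ⊗[K] P)).toLinearMap ∘ₗ TensorProduct.map Δ LinearMap.id ∘ₗ
    (TensorProduct.assoc K H H P).toLinearMap ∘ₗ TensorProduct.map Δ LinearMap.id

variable (K H) in
/-- Recombining `H ⊗ (H ⊗ (H ⊗ H^{⊗m}))` into `H^{⊗(m+3)}`. -/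
noncomputable def tripleTE (m : ℕ) :
    H ⊗[K] (H ⊗[K] (H ⊗[K] PT K H m)) ≃ₗ[K] PT K H (m+3) :=
  (TensorProduct.congr (LinearEquiv.refl K H)
      (TensorProduct.congr (LinearEquiv.refl K H) (ptSplit K H m).symm)).trans
    ((TensorProduct.congr (LinearEquiv.refl K H) (ptSplit K H (m+1)).symm).trans
      (ptSplit K H (m+2)).symm)

theorem tripleT_eq (m : ℕ) :
    (tripleTE K H m).toLinearMap
    = (ptSplit K H (m+2)).symm.toLinearMap ∘ₗ
      TensorProduct.map LinearMap.id (ptSplit K H (m+1)).symm.toLinearMap ∘ₗ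
      TensorProduct.map LinearMap.id
        (TensorProduct.map LinearMap.id (ptSplit K H m).symm.toLinearMap) := by
  ext x y z f
  simp [tripleTE]

theorem map_map_apply {M N P Q M' N' : Type*} [AddCommMonoid M] [AddCommMonoid N]
    [AddCommMonoid P] [AddCommMonoid Q] [AddCommMonoid M'] [AddCommMonoid N']
    [Module K M] [Module K N] [Module K P] [Module K Q] [Module K M'] [Module K N']
    (f : M →ₗ[K] N) (g : M' →ₗ[K] N') (f' : P →ₗ[K] M) (g' : Q →ₗ[K] M')
    (x : P ⊗[K] Q) :
    TensorProduct.map f g (TensorProduct.map f' g' x)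
      = TensorProduct.map (f ∘ₗ f') (g ∘ₗ g') x := by
  rw [TensorProduct.map_comp]; rfl

end Defs
section Facts

open TensorProduct PiTensorProduct

variable {K : Type*} [CommSemiring K] {H : Type*} [AddCommMonoid H] [Module K H]

theorem reindex_split {n : ℕ} (ρ : Equiv.Perm (Fin n)) :
    (ptSplit K H n).toLinearMap ∘ₗ
      (PiTensorProduct.reindex K (fun _ : Fin (n+1) => H) (extendPerm ρ)).toLinearMap
    = TensorProduct.map LinearMap.id
        (PiTensorProduct.reindex K (fun _ : Fin n => H) ρ).toLinearMap ∘ₗ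
      (ptSplit K H n).toLinearMap := by
  ext f
  show ptSplit K H n ((PiTensorProduct.reindex K (fun _ : Fin (n+1) => H) (extendPerm ρ))
      (tprod K f))
    = TensorProduct.map LinearMap.id
        (PiTensorProduct.reindex K (fun _ : Fin n => H) ρ).toLinearMap (ptSplit K H n (tprod K f))
  rw [reindex_tprod, ptSplit_tprod, ptSplit_tprod, TensorProduct.map_tmul]
  simp only [LinearMap.id_coe, id_eq, LinearEquiv.coe_coe, reindex_tprod]
  rw [extendPerm_symm]
  rw [extendPerm_zero]
  have hfn : (fun i : Fin n => f ((extendPerm (Equiv.symm ρ)) i.succ))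
      = fun i : Fin n => f (((Equiv.symm ρ) i).succ) := by
    funext i; rw [extendPerm_succ]
  rw [hfn]

theorem beta_alpha {P : Type*} [AddCommMonoid P] [Module K P] :
    TensorProduct.map LinearMap.id (swapF K H P).toLinearMap ∘ₗ (alphaE K H P).toLinearMap
    = (alphaE K H P).toLinearMap ∘ₗ
      TensorProduct.map
        (TensorProduct.map LinearMap.id (TensorProduct.comm K H H).toLinearMap)
        LinearMap.id := by
  ext x y z p
  simp

theorem xi_alpha (Δ : H →ₗ[K] H ⊗[K] H) {P : Type*} [AddCommMonoid P] [Module K P] :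
    xiMap Δ P = (alphaE K H P).toLinearMap ∘ₗ TensorProduct.map (assocDelta Δ) LinearMap.id := by
  ext x p
  show (TensorProduct.assoc K H H (H ⊗[K] P)) (TensorProduct.map Δ LinearMap.id
      ((TensorProduct.assoc K H H P) (TensorProduct.map Δ LinearMap.id (x ⊗ₜ[K] p))))
    = alphaE K H P (TensorProduct.map (assocDelta Δ) LinearMap.id (x ⊗ₜ[K] p))
  rw [TensorProduct.map_tmul, TensorProduct.map_tmul]
  simp only [LinearMap.id_coe, id_eq]
  have haD : assocDelta Δ x = (TensorProduct.assoc K H H H)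
      (TensorProduct.map Δ LinearMap.id (Δ x)) := rfl
  rw [haD]
  generalize Δ x = v
  induction v using TensorProduct.induction_on with
  | zero => simp
  | add v w hv hw =>
    simp only [map_add, TensorProduct.add_tmul] at *
    rw [hv, hw]
  | tmul a b =>
    rw [TensorProduct.assoc_tmul, TensorProduct.map_tmul, TensorProduct.map_tmul]
    simp only [LinearMap.id_coe, id_eq]
    generalize Δ a = w
    induction w using TensorProduct.induction_on with
    | zero => simp
    | add v w hv hw =>
      simp only [map_add, TensorProduct.add_tmul] at *
      rw [hv, hw]
    | tmul c d =>
      rw [TensorProduct.assoc_tmul, TensorProduct.assoc_tmul, alphaE_tmul]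

end Facts
section Fact1

open TensorProduct PiTensorProduct

variable {K : Type*} [CommSemiring K] {H : Type*} [AddCommMonoid H] [Module K H]

theorem DIter_two_step (Δ : H →ₗ[K] H ⊗[K] H) (m : ℕ) :
    DIter Δ (m+2)
    = (tripleTE K H m).toLinearMap ∘ₗ xiMap Δ (PT K H m) ∘ₗ
      (ptSplit K H m).toLinearMap ∘ₗ DIter Δ m := by
  apply LinearMap.ext; intro x
  show firstDelta Δ (m+1) (firstDelta Δ m (DIter Δ m x)) = _
  rw [firstDelta_eq, firstDelta_eq]
  simp only [LinearMap.coe_comp, LinearEquiv.coe_coe, Function.comp_apply,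
    LinearEquiv.apply_symm_apply, tripleT_eq, xiMap]
  rw [map_map_apply, LinearMap.comp_id, LinearMap.id_comp]
  -- now : Sp.symm (map id Sp.symm (assoc (map Δ Sp.symm (assoc (map Δ id (Sp (DIter x)))))))
  rw [show (TensorProduct.map Δ (ptSplit K H m).symm.toLinearMap)
      = TensorProduct.map LinearMap.id (ptSplit K H m).symm.toLinearMap ∘ₗ
        TensorProduct.map Δ LinearMap.id by
    rw [← TensorProduct.map_comp, LinearMap.comp_id, LinearMap.id_comp]]
  simp only [LinearMap.comp_apply]
  rw [show (TensorProduct.map (LinearMap.id : H ⊗[K] H →ₗ[K] H ⊗[K] H)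
      (ptSplit K H m).symm.toLinearMap)
      = TensorProduct.map (TensorProduct.map LinearMap.id LinearMap.id)
        (ptSplit K H m).symm.toLinearMap by rw [TensorProduct.map_id]]
  rw [TensorProduct.map_map_assoc]

end Fact1
section Fact2

open TensorProduct PiTensorProduct

variable {K : Type*} [CommSemiring K] {H : Type*} [AddCommMonoid H] [Module K H]

theorem tripleT_tmul (m : ℕ) (x y z : H) (f : Fin m → H) :
    tripleTE K H m (x ⊗ₜ[K] (y ⊗ₜ[K] (z ⊗ₜ[K] tprod K f)))
      = PiTensorProduct.tprod K (Fin.cons x (Fin.cons y (Fin.cons z f))) := by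
  simp only [tripleTE, LinearEquiv.trans_apply, TensorProduct.congr_tmul,
    LinearEquiv.refl_apply, ptSplit_symm_tmul]

theorem reindex_tripleT (m : ℕ) :
    (PiTensorProduct.reindex K (fun _ : Fin (m+3) => H)
        (extendPerm (Equiv.swap (0 : Fin (m+2)) 1))).toLinearMap ∘ₗ
      (tripleTE K H m).toLinearMap
    = (tripleTE K H m).toLinearMap ∘ₗ
      TensorProduct.map LinearMap.id (swapF K H (PT K H m)).toLinearMap := by
  ext x y z f
  show (PiTensorProduct.reindex K (fun _ : Fin (m+3) => H)
        (extendPerm (Equiv.swap (0 : Fin (m+2)) 1)))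
      (tripleTE K H m (x ⊗ₜ[K] (y ⊗ₜ[K] (z ⊗ₜ[K] tprod K f))))
    = tripleTE K H m (TensorProduct.map LinearMap.id (swapF K H (PT K H m)).toLinearMap
        (x ⊗ₜ[K] (y ⊗ₜ[K] (z ⊗ₜ[K] tprod K f))))
  rw [TensorProduct.map_tmul]
  simp only [LinearMap.id_coe, id_eq, LinearEquiv.coe_coe, swapF_tmul]
  rw [tripleT_tmul, tripleT_tmul, reindex_tprod]
  congr 1
  funext j

  rw [extendPerm_symm, Equiv.symm_swap]
  induction j using Fin.cases with
  | zero => rw [extendPerm_zero, Fin.cons_zero, Fin.cons_zero]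
  | succ i =>
    rw [extendPerm_succ, Fin.cons_succ, Fin.cons_succ]
    induction i using Fin.cases with
    | zero =>
      rw [Equiv.swap_apply_left, ← Fin.succ_zero_eq_one, Fin.cons_succ, Fin.cons_zero,
        Fin.cons_zero]
    | succ k =>
      induction k using Fin.cases with
      | zero =>
        rw [Fin.succ_zero_eq_one, Equiv.swap_apply_right, Fin.cons_zero]
        rw [← Fin.succ_zero_eq_one, Fin.cons_succ, Fin.cons_zero]
      | succ l =>
        have h0 : l.succ.succ ≠ (0 : Fin (m+2)) := Fin.succ_ne_zero _
        have h1 : l.succ.succ ≠ (1 : Fin (m+2)) := by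
          rw [← Fin.succ_zero_eq_one]
          intro h
          exact Fin.succ_ne_zero l (Fin.succ_injective _ h)
        rw [Equiv.swap_apply_of_ne_of_ne h0 h1, Fin.cons_succ, Fin.cons_succ, Fin.cons_succ,
          Fin.cons_succ]

end Fact2
section HS

open TensorProduct PiTensorProduct

variable {K : Type*} [CommSemiring K] {H : Type*} [AddCommMonoid H] [Module K H]

theorem beta_xi_of_hs (Δ : H →ₗ[K] H ⊗[K] H)
    (hs : TensorProduct.map LinearMap.id (TensorProduct.comm K H H).toLinearMap ∘ₗ
        assocDelta Δ = assocDelta Δ)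
    (P : Type*) [AddCommMonoid P] [Module K P] :
    TensorProduct.map LinearMap.id (swapF K H P).toLinearMap ∘ₗ xiMap Δ P = xiMap Δ P := by
  apply LinearMap.ext; intro w
  have h1 := DFunLike.congr_fun (xi_alpha Δ (P := P)) w
  simp only [LinearMap.comp_apply, LinearEquiv.coe_coe] at h1 ⊢
  rw [h1]
  have h2 := DFunLike.congr_fun (beta_alpha (K := K) (H := H) (P := P))
    (TensorProduct.map (assocDelta Δ) LinearMap.id w)
  simp only [LinearMap.comp_apply, LinearEquiv.coe_coe] at h2
  rw [h2, map_map_apply, LinearMap.comp_id]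
  rw [hs]

theorem hs_of_hsym (Δ : H →ₗ[K] H ⊗[K] H)
    (hsym : (PiTensorProduct.reindex K (fun _ : Fin 3 => H)
          (extendPerm (Equiv.swap (0 : Fin 2) 1))).toLinearMap ∘ₗ DIter Δ 2
        = DIter Δ 2) :
    TensorProduct.map LinearMap.id (TensorProduct.comm K H H).toLinearMap ∘ₗ
      assocDelta Δ = assocDelta Δ := by
  -- step 1 : invariance transferred to the ξ-level
  have step1 : ∀ u : H ⊗[K] PT K H 0,
      TensorProduct.map LinearMap.id (swapF K H (PT K H 0)).toLinearMap (xiMap Δ (PT K H 0) u)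
        = xiMap Δ (PT K H 0) u := by
    intro u
    set x : H := (pt1 K H).symm ((ptSplit K H 0).symm u) with hx
    have hu : u = ptSplit K H 0 (DIter Δ 0 x) := by
      show u = ptSplit K H 0 (pt1 K H x)
      rw [hx]
      simp
    have h2 := DFunLike.congr_fun hsym x
    rw [DIter_two_step Δ 0] at h2
    simp only [LinearMap.comp_apply, LinearEquiv.coe_coe] at h2
    have h3 := DFunLike.congr_fun (reindex_tripleT (K := K) (H := H) 0)
      (xiMap Δ (PT K H 0) (ptSplit K H 0 (DIter Δ 0 x)))
    simp only [LinearMap.comp_apply, LinearEquiv.coe_coe] at h3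
    rw [h3] at h2
    have h4 := (tripleTE K H 0).injective h2
    rw [← hu] at h4
    exact h4
  -- step 2 : cancel the `⊗ PT 0` factor
  apply LinearMap.ext; intro x
  have h5 := step1 (x ⊗ₜ[K] tprod K (fun i : Fin 0 => i.elim0))
  have h6 := DFunLike.congr_fun (xi_alpha Δ (P := PT K H 0))
    (x ⊗ₜ[K] PiTensorProduct.tprod K (fun i : Fin 0 => i.elim0))
  simp only [LinearMap.comp_apply, LinearEquiv.coe_coe] at h5 h6
  rw [h6] at h5
  have h7 := DFunLike.congr_fun (beta_alpha (K := K) (H := H) (P := PT K H 0))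
    (TensorProduct.map (assocDelta Δ) LinearMap.id (x ⊗ₜ[K] PiTensorProduct.tprod K (fun i : Fin 0 => i.elim0)))
  simp only [LinearMap.comp_apply, LinearEquiv.coe_coe] at h7
  rw [h7] at h5
  have h8 := (alphaE K H (PT K H 0)).injective h5
  rw [map_map_apply, LinearMap.comp_id] at h8
  rw [TensorProduct.map_tmul, TensorProduct.map_tmul] at h8
  simp only [LinearMap.id_coe, id_eq, LinearMap.comp_apply] at h8
  -- h8 : (map id comm) (assocDelta Δ x) ⊗ₜ t0 = assocDelta Δ x ⊗ₜ t0
  have extract : ∀ u v : H ⊗[K] (H ⊗[K] H),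
      u ⊗ₜ[K] tprod K (s := fun _ : Fin 0 => H) (fun i : Fin 0 => i.elim0)
        = v ⊗ₜ[K] tprod K (s := fun _ : Fin 0 => H) (fun i : Fin 0 => i.elim0) → u = v := by
    intro u v huv
    have := congrArg (fun w => (TensorProduct.rid K (H ⊗[K] (H ⊗[K] H)))
      (TensorProduct.map LinearMap.id
        (PiTensorProduct.isEmptyEquiv (Fin 0)).toLinearMap w)) huv
    simpa [isEmptyEquiv_apply_tprod] using this
  simp only [LinearMap.comp_apply]
  exact extract _ _ h8

end HS
section FdA

open TensorProduct PiTensorProduct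

variable {K : Type*} [CommSemiring K] {H : Type*} [AddCommMonoid H] [Module K H]

theorem reindex_ptMerge {k : ℕ} (ρ : Equiv.Perm (Fin k)) :
    (PiTensorProduct.reindex K (fun _ : Fin (k+2) => H)
        (extendPerm (extendPerm ρ))).toLinearMap ∘ₗ (ptMerge K H k).toLinearMap
    = (ptMerge K H k).toLinearMap ∘ₗ
      TensorProduct.map LinearMap.id
        (PiTensorProduct.reindex K (fun _ : Fin k => H) ρ).toLinearMap := by
  ext x y f
  show (PiTensorProduct.reindex K (fun _ : Fin (k+2) => H) (extendPerm (extendPerm ρ)))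
      (ptMerge K H k ((x ⊗ₜ[K] y) ⊗ₜ[K] tprod K f))
    = ptMerge K H k (TensorProduct.map LinearMap.id
        (PiTensorProduct.reindex K (fun _ : Fin k => H) ρ).toLinearMap
          ((x ⊗ₜ[K] y) ⊗ₜ[K] tprod K f))
  rw [TensorProduct.map_tmul]
  simp only [LinearMap.id_coe, id_eq, LinearEquiv.coe_coe, reindex_tprod, ptMerge_tmul]
  congr 1
  funext j
  induction j using Fin.cases with
  | zero =>
    rw [extendPerm_symm, extendPerm_zero, Fin.cons_zero, Fin.cons_zero]
  | succ i =>
    rw [extendPerm_symm, extendPerm_succ, Fin.cons_succ, Fin.cons_succ]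
    induction i using Fin.cases with
    | zero =>
      rw [extendPerm_symm, extendPerm_zero, Fin.cons_zero, Fin.cons_zero]
    | succ l =>
      rw [extendPerm_symm, extendPerm_succ, Fin.cons_succ, Fin.cons_succ]

theorem reindex_firstDelta (Δ : H →ₗ[K] H ⊗[K] H) (k : ℕ) (ρ : Equiv.Perm (Fin k)) :
    (PiTensorProduct.reindex K (fun _ : Fin (k+2) => H)
        (extendPerm (extendPerm ρ))).toLinearMap ∘ₗ firstDelta Δ k
    = firstDelta Δ k ∘ₗ
      (PiTensorProduct.reindex K (fun _ : Fin (k+1) => H) (extendPerm ρ)).toLinearMap := by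
  have hswap : TensorProduct.map (LinearMap.id : H ⊗[K] H →ₗ[K] H ⊗[K] H)
        (PiTensorProduct.reindex K (fun _ : Fin k => H) ρ).toLinearMap ∘ₗ
        TensorProduct.map Δ (LinearMap.id : PT K H k →ₗ[K] PT K H k)
      = TensorProduct.map Δ (LinearMap.id : PT K H k →ₗ[K] PT K H k) ∘ₗ
        TensorProduct.map (LinearMap.id : H →ₗ[K] H)
          (PiTensorProduct.reindex K (fun _ : Fin k => H) ρ).toLinearMap := by
    rw [← TensorProduct.map_comp, ← TensorProduct.map_comp, LinearMap.comp_id,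
      LinearMap.comp_id, LinearMap.id_comp, LinearMap.id_comp]
  set M := (ptMerge K H k).toLinearMap
  set D := TensorProduct.map Δ (LinearMap.id : PT K H k →ₗ[K] PT K H k)
  set S := (ptSplit K H k).toLinearMap
  set r := (PiTensorProduct.reindex K (fun _ : Fin (k+1) => H) (extendPerm ρ)).toLinearMap
  set r0 := (PiTensorProduct.reindex K (fun _ : Fin k => H) ρ).toLinearMap
  set r2 := TensorProduct.map (LinearMap.id : H ⊗[K] H →ₗ[K] H ⊗[K] H) r0
  set r3 := TensorProduct.map (LinearMap.id : H →ₗ[K] H) r0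
  rw [firstDelta]
  rw [← LinearMap.comp_assoc, reindex_ptMerge]
  rw [LinearMap.comp_assoc, ← LinearMap.comp_assoc S D r2, hswap,
    LinearMap.comp_assoc S r3 D, ← reindex_split, ← LinearMap.comp_assoc r S D,
    ← LinearMap.comp_assoc r (D ∘ₗ S) M]

end FdA

/-- Lemma 3.1: let `(H, Δ)` be a coalgebra whose cooperation satisfies
`Δ^{(2)} = (id ⊗ τ)Δ^{(2)}`.  Then for all `n > 0`, the map `Δ^{(n)} : H → H^{⊗(n+1)}`
has its last `n` components invariant under the action of `Σ_n`:
`(id_H ⊗ P_σ) ∘ Δ^{(n)} = Δ^{(n)}` for every `σ ∈ Σ_n`. -/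
theorem stmt3 (K : Type*) [Field K] [CharZero K] (H : Type*) [AddCommGroup H] [Module K H]
    (Δ : H →ₗ[K] H ⊗[K] H)
    (hsym : (PiTensorProduct.reindex K (fun _ : Fin 3 => H)
          (extendPerm (Equiv.swap (0 : Fin 2) 1))).toLinearMap ∘ₗ DIter Δ 2
        = DIter Δ 2) :
    ∀ n : ℕ, 0 < n → ∀ σ : Equiv.Perm (Fin n),
      (PiTensorProduct.reindex K (fun _ : Fin (n + 1) => H)
          (extendPerm σ)).toLinearMap ∘ₗ DIter Δ n
        = DIter Δ n := by
  have hs := hs_of_hsym Δ hsym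
  suffices h : ∀ m : ℕ, ∀ σ : Equiv.Perm (Fin (m+1)),
      (PiTensorProduct.reindex K (fun _ : Fin (m+2) => H)
          (extendPerm σ)).toLinearMap ∘ₗ DIter Δ (m+1) = DIter Δ (m+1) by
    intro n hn σ
    obtain ⟨m, rfl⟩ : ∃ m, n = m + 1 := ⟨n - 1, by omega⟩
    exact h m σ
  intro m
  induction m with
  | zero =>
    intro σ
    haveI : Subsingleton (Fin (0+1)) := ⟨fun a b => Fin.ext (by omega)⟩
    have hσ : σ = 1 := Equiv.ext fun x => Subsingleton.elim _ _
    subst hσ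
    rw [extendPerm_one, show (1 : Equiv.Perm (Fin 2)) = Equiv.refl (Fin 2) from rfl,
      PiTensorProduct.reindex_refl]
    simp
  | succ k ih =>
    intro σ
    -- the invariance predicate
    set QQ : Equiv.Perm (Fin (k+2)) → Prop := fun τ =>
      (PiTensorProduct.reindex K (fun _ : Fin (k+3) => H)
          (extendPerm τ)).toLinearMap ∘ₗ DIter Δ (k+2) = DIter Δ (k+2) with hQQ
    have hcomp : ∀ a b : Equiv.Perm (Fin (k+2)),
        (PiTensorProduct.reindex K (fun _ : Fin (k+3) => H)
            (extendPerm (a * b))).toLinearMap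
          = (PiTensorProduct.reindex K (fun _ : Fin (k+3) => H) (extendPerm a)).toLinearMap ∘ₗ
            (PiTensorProduct.reindex K (fun _ : Fin (k+3) => H) (extendPerm b)).toLinearMap := by
      intro a b
      rw [extendPerm_mul, Equiv.Perm.mul_def, ← PiTensorProduct.reindex_trans,
        LinearEquiv.coe_trans]
    have hmul : ∀ a b : Equiv.Perm (Fin (k+2)), QQ a → QQ b → QQ (a * b) := by
      intro a b ha hb
      rw [hQQ]
      simp only
      rw [hcomp, LinearMap.comp_assoc, hb, ha]
    have hQ1 : QQ 1 := by
      rw [hQQ]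
      simp only
      rw [extendPerm_one, show (1 : Equiv.Perm (Fin (k+3))) = Equiv.refl (Fin (k+3)) from rfl,
        PiTensorProduct.reindex_refl]
      simp
    have hinv : ∀ a : Equiv.Perm (Fin (k+2)), QQ a → QQ a⁻¹ := by
      intro a ha
      rw [hQQ] at ha ⊢
      simp only at ha ⊢
      conv_lhs => rw [← ha]
      apply LinearMap.ext; intro x
      simp only [LinearMap.comp_apply, LinearEquiv.coe_coe]
      rw [show (a⁻¹ : Equiv.Perm (Fin (k+2))) = a.symm from rfl, ← extendPerm_symm,
        ← PiTensorProduct.reindex_symm, LinearEquiv.symm_apply_apply]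
    have hfix : ∀ ρ : Equiv.Perm (Fin (k+1)), QQ (extendPerm ρ) := by
      intro ρ
      rw [hQQ]
      simp only
      rw [show DIter Δ (k+2) = firstDelta Δ (k+1) ∘ₗ DIter Δ (k+1) from rfl,
        ← LinearMap.comp_assoc, reindex_firstDelta, LinearMap.comp_assoc, ih ρ]
    have hswap01 : QQ (Equiv.swap (0 : Fin (k+2)) 1) := by
      rw [hQQ]
      simp only
      rw [DIter_two_step Δ k, ← LinearMap.comp_assoc, reindex_tripleT k,
        LinearMap.comp_assoc,
        ← LinearMap.comp_assoc ((ptSplit K H k).toLinearMap ∘ₗ DIter Δ k)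
          (xiMap Δ (PT K H k))
          (TensorProduct.map LinearMap.id (swapF K H (PT K H k)).toLinearMap),
        beta_xi_of_hs Δ hs]
    have hswap0p : ∀ p : Fin (k+2), QQ (Equiv.swap 0 p) := by
      intro p
      rcases eq_or_ne p 0 with rfl | hp
      · rw [Equiv.swap_self]
        exact hQ1
      rcases eq_or_ne p 1 with rfl | hp1
      · exact hswap01
      obtain ⟨q, rfl⟩ : ∃ q : Fin (k+1), q.succ = p := ⟨p.pred hp, Fin.succ_pred p hp⟩
      have h1q : QQ (Equiv.swap 1 q.succ) := by
        have he : Equiv.swap (1 : Fin (k+2)) q.succ = extendPerm (Equiv.swap 0 q) := by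
          rw [extendPerm_swap, Fin.succ_zero_eq_one]
        rw [he]
        exact hfix _
      have key : Equiv.swap (0 : Fin (k+2)) q.succ
          = Equiv.swap 1 q.succ * Equiv.swap 0 1 * (Equiv.swap 1 q.succ)⁻¹ := by
        have h01 : (0 : Fin (k+2)) ≠ 1 := by
          rw [← Fin.succ_zero_eq_one]
          exact Ne.symm (Fin.succ_ne_zero 0)
        have happ := Equiv.swap_apply_apply (Equiv.swap (1 : Fin (k+2)) q.succ) 0 1
        rw [Equiv.swap_apply_of_ne_of_ne h01 (Ne.symm (Fin.succ_ne_zero q)),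
          Equiv.swap_apply_left] at happ
        exact happ
      rw [key]
      exact hmul _ _ (hmul _ _ h1q hswap01) (hinv _ h1q)
    have hdec : σ = Equiv.swap 0 (σ 0) * extendPerm ((Equiv.Perm.decomposeFin σ).2) := by
      apply Equiv.ext; intro x
      have hσeq : σ = Equiv.Perm.decomposeFin.symm (Equiv.Perm.decomposeFin σ) := by
        rw [Equiv.symm_apply_apply]
      have h1 : (Equiv.Perm.decomposeFin σ).1 = σ 0 := by
        conv_rhs => rw [hσeq]
        rw [show Equiv.Perm.decomposeFin σ
            = ((Equiv.Perm.decomposeFin σ).1, (Equiv.Perm.decomposeFin σ).2) from rfl,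
          Equiv.Perm.decomposeFin_symm_apply_zero]
      induction x using Fin.cases with
      | zero =>
        rw [Equiv.Perm.mul_apply, extendPerm_zero, Equiv.swap_apply_left]
      | succ i =>
        conv_lhs => rw [hσeq]
        rw [show Equiv.Perm.decomposeFin σ
            = ((Equiv.Perm.decomposeFin σ).1, (Equiv.Perm.decomposeFin σ).2) from rfl,
          Equiv.Perm.decomposeFin_symm_apply_succ, Equiv.Perm.mul_apply, extendPerm_succ, h1]
    rw [hdec]
    exact hmul _ _ (hswap0p _) (hfix _)
end ExtendPerm
end

section
/- Let H be a Moor-bialgebra. If x ∈ ker Δ_H is a primitive element and y ∈ H satisfies e(y) = 0 (e.g. y is homogeneous of degree at least 2), then x ≺ y is primitive, i.e. Δ_H(x ≺ y) = 0. More generally, for any a ∈ ker Δ_H and any h ∈ H_* := ⊕_{p>1} H_p, one has a ≺ h ∈ ker Δ_H; thus H_* acts on ker Δ_H on the right by a ⊗ h ↦ a ≺ h. -/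
open scoped TensorProduct

/-- Proposition 4.1 (part): in a Moor-bialgebra `H`, if `x` is primitive and `e(y) = 0`
(e.g. `y` homogeneous of degree at least `2`), then `x ≺ y` is primitive; more generally
`ker Δ_H ≺ H₊ ⊆ ker Δ_H`, where `H₊ = ⊕_{p>1} H_p`, so `H₊` acts on `ker Δ_H` on the
right by `a ⊗ h ↦ a ≺ h`. -/
theorem stmt6 (K : Type*) [Field K] [CharZero K] (H : Type*) [AddCommGroup H] [Module K H]
    -- the grading `H = ⊕_{p>0} H_p`
    (Hc : ℕ → Submodule K H) (hinternal : DirectSum.IsInternal Hc) (h0 : Hc 0 = ⊥)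
    -- the Moor-algebra structure, compatible with the grading
    (prec : H →ₗ[K] H →ₗ[K] H)
    (hgr : ∀ (p q : ℕ), ∀ x ∈ Hc p, ∀ y ∈ Hc q, prec x y ∈ Hc (p + q))
    (hperm : ∀ x y z : H, prec (prec x y) z = prec (prec x z) y)
    (hnil : ∀ x y z : H, prec x (prec y z) = 0)
    -- the canonical projection `e : H → H₁`
    (e : H →ₗ[K] H) (he₁ : ∀ x ∈ Hc 1, e x = x) (he₂ : ∀ p ≠ 1, ∀ x ∈ Hc p, e x = 0)
    -- the Moor-cooperation
    (Δ : H →ₗ[K] H ⊗[K] H)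
    (hco₁ : (TensorProduct.map LinearMap.id Δ) ∘ₗ Δ = 0)
    (hco₂ : (TensorProduct.map Δ LinearMap.id) ∘ₗ Δ
      = ((TensorProduct.assoc K H H H).symm.toLinearMap ∘ₗ
          (TensorProduct.map LinearMap.id (TensorProduct.comm K H H).toLinearMap) ∘ₗ
            (TensorProduct.assoc K H H H).toLinearMap) ∘ₗ
        (TensorProduct.map Δ LinearMap.id) ∘ₗ Δ)
    -- the compatibility relation `Δ(x ≺ y) = x ⊗ e(y) + (x₍₁₎ ≺ y) ⊗ x₍₂₎`
    (hcompat : ∀ x y : H,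
      Δ (prec x y) = x ⊗ₜ[K] e y + (TensorProduct.map (prec.flip y) LinearMap.id) (Δ x)) :
    (∀ x y : H, Δ x = 0 → e y = 0 → Δ (prec x y) = 0) ∧
    (∀ a h : H, Δ a = 0 → h ∈ (⨆ p : ℕ, ⨆ _ : 1 < p, Hc p) → Δ (prec a h) = 0) := by
  constructor
  · intro x y hx hy
    rw [hcompat, hx, hy]
    simp
  · intro a h ha hh
    have hle : (⨆ p : ℕ, ⨆ _ : 1 < p, Hc p) ≤ LinearMap.ker e := by
      apply iSup_le; intro p; apply iSup_le; intro hp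
      intro x hx
      exact he₂ p (by omega) x hx
    have heh : e h = 0 := hle hh
    rw [hcompat, ha, heh]
    simp
end

section
/- Let K be a field of characteristic zero and V a K-vector space. On the free Moor-algebra Moor(V) = V ⊗ S(V), the cooperation Δ determined by Δ(v ⊗ 1_K) = 0 and Δ(x ≺ y) = x ⊗ π(y) + (x_{(1)} ≺ y) ⊗ x_{(2)} (π : Moor(V) → V ⊗ K the canonical projection) satisfies the explicit formula Δ([v_1|v_2, ..., v_n]) = Σ_{k=2}^n [v_1|v_2, ..., v̂_k, ..., v_n] ⊗ (v_k ⊗ 1_K) for all v_1, ..., v_n ∈ V, where v̂_k means that v_k is omitted. -/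
open scoped TensorProduct

/-- Theorem 4.2 (part of proof): on the free Moor-algebra `Moor(V) = V ⊗ S(V)`, the
cooperation `Δ` determined by `Δ(v ⊗ 1) = 0` and
`Δ(x ≺ y) = x ⊗ π(y) + (x₍₁₎ ≺ y) ⊗ x₍₂₎` satisfies
`Δ([v₁|v₂,…,vₙ]) = Σₖ [v₁|v₂,…,v̂ₖ,…,vₙ] ⊗ (vₖ ⊗ 1)`. -/
theorem stmt7 (K : Type*) [Field K] [CharZero K] (V : Type*) [AddCommGroup V] [Module K V]
    -- the free Moor operation `≺` on `V ⊗ S(V)`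
    (prec : (V ⊗[K] SymmAlg K V) →ₗ[K] (V ⊗[K] SymmAlg K V) →ₗ[K] (V ⊗[K] SymmAlg K V))
    (hprec₁ : ∀ (v v' : V) (ω : SymmAlg K V),
      prec (v ⊗ₜ[K] ω) (v' ⊗ₜ[K] (1 : SymmAlg K V)) = v ⊗ₜ[K] (ω * symI K V v'))
    (hprec₂ : ∀ (v v' w : V) (ω ω' : SymmAlg K V),
      prec (v ⊗ₜ[K] ω) (v' ⊗ₜ[K] (symI K V w * ω')) = 0)
    -- the canonical projection `π : Moor(V) → V ⊗ K`
    (π : (V ⊗[K] SymmAlg K V) →ₗ[K] (V ⊗[K] SymmAlg K V))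
    (hπ₁ : ∀ v : V, π (v ⊗ₜ[K] (1 : SymmAlg K V)) = v ⊗ₜ[K] (1 : SymmAlg K V))
    (hπ₂ : ∀ (v w : V) (ω : SymmAlg K V), π (v ⊗ₜ[K] (symI K V w * ω)) = 0)
    -- the cooperation `Δ`
    (Δ : (V ⊗[K] SymmAlg K V) →ₗ[K] (V ⊗[K] SymmAlg K V) ⊗[K] (V ⊗[K] SymmAlg K V))
    (hΔ₀ : ∀ v : V, Δ (v ⊗ₜ[K] (1 : SymmAlg K V)) = 0)
    (hΔ : ∀ x y : V ⊗[K] SymmAlg K V,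
      Δ (prec x y) = x ⊗ₜ[K] π y + (TensorProduct.map (prec.flip y) LinearMap.id) (Δ x)) :
    ∀ (v : V) (l : List V),
      Δ (l.foldl (fun a w => prec a (w ⊗ₜ[K] (1 : SymmAlg K V)))
          (v ⊗ₜ[K] (1 : SymmAlg K V)))
        = ∑ k : Fin l.length,
            ((l.eraseIdx k).foldl (fun a w => prec a (w ⊗ₜ[K] (1 : SymmAlg K V)))
              (v ⊗ₜ[K] (1 : SymmAlg K V))) ⊗ₜ[K] ((l.get k) ⊗ₜ[K] (1 : SymmAlg K V)) := by
  intro v l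
  induction l using List.reverseRecOn with
  | nil => simpa using hΔ₀ v
  | append_singleton l w ih =>
    have hFc : (l ++ [w]).foldl (fun a w => prec a (w ⊗ₜ[K] (1 : SymmAlg K V)))
        (v ⊗ₜ[K] (1 : SymmAlg K V))
        = prec (l.foldl (fun a w => prec a (w ⊗ₜ[K] (1 : SymmAlg K V)))
            (v ⊗ₜ[K] (1 : SymmAlg K V))) (w ⊗ₜ[K] (1 : SymmAlg K V)) := by
      simp [List.foldl_append]
    rw [hFc, hΔ, ih, hπ₁, map_sum]
    have hlen : (l ++ [w]).length = l.length + 1 := by simp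
    rw [← Fin.sum_congr' _ hlen.symm]
    rw [Fin.sum_univ_castSucc]
    simp only [Fin.coe_cast, Fin.coe_castSucc, Fin.val_last]
    rw [add_comm]
    congr 1
    · apply Finset.sum_congr rfl
      intro k _
      have hk : (k : ℕ) < l.length := k.isLt
      rw [TensorProduct.map_tmul]
      rw [List.eraseIdx_append_of_lt_length hk]
      simp only [LinearMap.flip_apply, LinearMap.id_coe, id_eq, Fin.coe_cast, Fin.coe_castSucc,
        List.get_eq_getElem, List.getElem_append_left hk, List.foldl_append,
        List.foldl_cons, List.foldl_nil]
    · simp only [Fin.val_last, List.get_eq_getElem, List.getElem_concat_length rfl]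
      rw [List.eraseIdx_append_of_length_le (le_refl l.length)]
      simp
end

section
/- Let K be a field of characteristic zero and V a K-vector space. The K-vector space V ⊗ S(V) equipped with the bilinear operation ⊐ defined by (v_1 ⊗ v_2 ∨ ... ∨ v_n) ⊐ (w_1 ⊗ w_2 ∨ ... ∨ w_m) = v_1 ⊗ v_2 ∨ ... ∨ v_n ∨ w_1 ∨ w_2 ∨ ... ∨ w_m is the free Perm-algebra over V: the operation ⊐ is associative and satisfies (x ⊐ y) ⊐ z = (x ⊐ z) ⊐ y, and for any Perm-algebra P and any linear map f : V → P there is a unique Perm-algebra morphism f̃ : V ⊗ S(V) → P with f̃(v ⊗ 1_K) = f(v). -/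
open scoped TensorProduct

section Aux

variable (K : Type*) [Field K] [CharZero K] (V : Type*) [AddCommGroup V] [Module K V]

lemma symmAlg_mul_comm : ∀ a b : SymmAlg K V, a * b = b * a := by
  set p := RingQuot.mkAlgHom K (SymRel K V) with hp
  have key : ∀ x y : TensorAlgebra K V, Commute (p x) (p y) := by
    intro x
    induction x using TensorAlgebra.induction with
    | algebraMap r =>
      intro y
      rw [AlgHom.commutes]
      exact Algebra.commute_algebraMap_left r (p y)
    | ι v =>
      intro y
      induction y using TensorAlgebra.induction with
      | algebraMap r =>
        rw [AlgHom.commutes]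
        exact (Algebra.commute_algebraMap_left r _).symm
      | ι w =>
        have := RingQuot.mkAlgHom_rel K (@SymRel.comm K _ V _ _ v w)
        rw [map_mul, map_mul] at this
        exact this
      | mul a b ha hb => rw [map_mul]; exact (ha).mul_right hb
      | add a b ha hb => rw [map_add]; exact ha.add_right hb
    | mul a b ha hb => intro y; rw [map_mul]; exact (ha y).mul_left (hb y)
    | add a b ha hb => intro y; rw [map_add]; exact (ha y).add_left (hb y)
  intro a b
  obtain ⟨x, rfl⟩ := RingQuot.mkAlgHom_surjective K (SymRel K V) a
  obtain ⟨y, rfl⟩ := RingQuot.mkAlgHom_surjective K (SymRel K V) b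
  exact key x y

noncomputable instance symmAlgCommRing : CommRing (SymmAlg K V) :=
  { (inferInstance : Ring (SymmAlg K V)) with mul_comm := symmAlg_mul_comm K V }

noncomputable def permMul :
    (V ⊗[K] SymmAlg K V) →ₗ[K] (V ⊗[K] SymmAlg K V) →ₗ[K] (V ⊗[K] SymmAlg K V) :=
  ((LinearMap.lTensorHom V).comp ((LinearMap.mul K (SymmAlg K V)).flip.comp
    (TensorProduct.lift ((LinearMap.mul K (SymmAlg K V)).comp (symI K V))))).flip

@[simp] lemma permMul_tmul (v w : V) (ω ω' : SymmAlg K V) :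
    permMul K V (v ⊗ₜ[K] ω) (w ⊗ₜ[K] ω') = v ⊗ₜ[K] (ω * symI K V w * ω') := by
  simp [permMul, LinearMap.lTensorHom, mul_assoc]
  congr 1
  ring

end Aux
set_option linter.unusedSectionVars false

section Aux2
variable (K : Type*) [Field K] [CharZero K] (V : Type*) [AddCommGroup V] [Module K V]

lemma permMul_assoc (x y z : V ⊗[K] SymmAlg K V) :
    permMul K V (permMul K V x y) z = permMul K V x (permMul K V y z) := by
  induction x using TensorProduct.induction_on with
  | zero => simp
  | add a b ha hb => simp only [map_add, LinearMap.add_apply, ha, hb]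
  | tmul v ω =>
    induction y using TensorProduct.induction_on with
    | zero => simp
    | add a b ha hb => simp only [map_add, LinearMap.add_apply, ha, hb]
    | tmul w ω' =>
      induction z using TensorProduct.induction_on with
      | zero => simp
      | add a b ha hb => simp only [map_add, LinearMap.add_apply, ha, hb]
      | tmul u ω'' => simp [permMul_tmul, mul_assoc]

lemma permMul_perm (x y z : V ⊗[K] SymmAlg K V) :
    permMul K V (permMul K V x y) z = permMul K V (permMul K V x z) y := by
  induction x using TensorProduct.induction_on with
  | zero => simp
  | add a b ha hb => simp only [map_add, LinearMap.add_apply, ha, hb]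
  | tmul v ω =>
    induction y using TensorProduct.induction_on with
    | zero => simp
    | add a b ha hb => simp only [map_add, LinearMap.add_apply, ha, hb]
    | tmul w ω' =>
      induction z using TensorProduct.induction_on with
      | zero => simp
      | add a b ha hb => simp only [map_add, LinearMap.add_apply, ha, hb]
      | tmul u ω'' =>
        simp only [permMul_tmul]
        congr 1
        ring

lemma permMul_universal (P : Type*) [AddCommGroup P] [Module K P]
    (multP : P →ₗ[K] P →ₗ[K] P)
    (hassoc : ∀ x y z : P, multP (multP x y) z = multP x (multP y z))
    (hperm : ∀ x y z : P, multP (multP x y) z = multP (multP x z) y)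
    (f : V →ₗ[K] P) :
    ∃! F : (V ⊗[K] SymmAlg K V) →ₗ[K] P,
      (∀ v : V, F (v ⊗ₜ[K] (1 : SymmAlg K V)) = f v) ∧
      (∀ x y : V ⊗[K] SymmAlg K V, F (permMul K V x y) = multP (F x) (F y)) := by
  classical
  set g : V →ₗ[K] Module.End K P := multP.flip.comp f with hg
  set T : TensorAlgebra K V →ₐ[K] Module.End K P := TensorAlgebra.lift K g with hT
  have hrel : ∀ ⦃x y : TensorAlgebra K V⦄, SymRel K V x y → T x = T y := by
    rintro _ _ ⟨v, w⟩
    rw [map_mul, map_mul, hT, TensorAlgebra.lift_ι_apply, TensorAlgebra.lift_ι_apply]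
    ext p
    simp only [Module.End.mul_apply, hg, LinearMap.coe_comp, Function.comp_apply,
      LinearMap.flip_apply]
    exact hperm p (f w) (f v)
  set Φ : SymmAlg K V →ₐ[K] Module.End K P := RingQuot.liftAlgHom K ⟨T, hrel⟩ with hΦ
  have hΦι : ∀ (w : V) (p : P), Φ (symI K V w) p = multP p (f w) := by
    intro w p
    have : Φ (symI K V w) = g w := by
      rw [hΦ, symI]
      simp only [LinearMap.coe_comp, Function.comp_apply, AlgHom.toLinearMap_apply]
      rw [RingQuot.liftAlgHom_mkAlgHom_apply, hT, TensorAlgebra.lift_ι_apply]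
    rw [this]; rfl
  have hL1 : ∀ (ω : SymmAlg K V) (a b : P), Φ ω (multP a b) = multP a (Φ ω b) := by
    intro ω
    obtain ⟨x, rfl⟩ := RingQuot.mkAlgHom_surjective K (SymRel K V) ω
    induction x using TensorAlgebra.induction with
    | algebraMap r =>
      intro a b
      rw [Algebra.algebraMap_eq_smul_one, map_smul, map_one]
      simp [map_smul]
    | ι v =>
      intro a b
      have h := hΦι v
      have e : (RingQuot.mkAlgHom K (SymRel K V)) (TensorAlgebra.ι K v) = symI K V v := rfl
      rw [e, h, h, hassoc]
    | mul x y hx hy =>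
      intro a b
      rw [map_mul, map_mul, Module.End.mul_apply, Module.End.mul_apply, hy, hx]
    | add x y hx hy =>
      intro a b
      rw [map_add, map_add, LinearMap.add_apply, LinearMap.add_apply, hx, hy, map_add]
  set F : (V ⊗[K] SymmAlg K V) →ₗ[K] P :=
    TensorProduct.lift (Φ.toLinearMap.flip.comp f) with hF
  have hFt : ∀ (v : V) (ω : SymmAlg K V), F (v ⊗ₜ[K] ω) = Φ ω (f v) := by
    intro v ω; simp [hF]
  have hF1 : ∀ v : V, F (v ⊗ₜ[K] (1 : SymmAlg K V)) = f v := by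
    intro v; rw [hFt, map_one]; rfl
  have hFmor : ∀ x y : V ⊗[K] SymmAlg K V,
      F (permMul K V x y) = multP (F x) (F y) := by
    intro x y
    induction x using TensorProduct.induction_on with
    | zero => simp
    | add a b ha hb => simp only [map_add, LinearMap.add_apply, ha, hb]
    | tmul v ω =>
      induction y using TensorProduct.induction_on with
      | zero => simp
      | add a b ha hb => simp only [map_add, LinearMap.add_apply, ha, hb]
      | tmul w ω' =>
        rw [permMul_tmul, hFt, hFt, hFt]
        have e : ω * symI K V w * ω' = ω' * symI K V w * ω := by ring
        rw [e, map_mul, map_mul, Module.End.mul_apply, Module.End.mul_apply, hΦι, hL1]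
  refine ⟨F, ⟨hF1, hFmor⟩, ?_⟩
  rintro F' ⟨hF1', hFmor'⟩
  have hQ : ∀ x : TensorAlgebra K V, ∀ (a : SymmAlg K V) (v : V),
      F' (v ⊗ₜ[K] a) = F (v ⊗ₜ[K] a) →
      F' (v ⊗ₜ[K] (a * RingQuot.mkAlgHom K (SymRel K V) x))
        = F (v ⊗ₜ[K] (a * RingQuot.mkAlgHom K (SymRel K V) x)) := by
    intro x
    induction x using TensorAlgebra.induction with
    | algebraMap r =>
      intro a v h
      have e : a * RingQuot.mkAlgHom K (SymRel K V) (algebraMap K (TensorAlgebra K V) r)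
          = r • a := by
        rw [AlgHom.commutes, mul_comm a, ← Algebra.smul_def]
      rw [e, TensorProduct.tmul_smul, map_smul, map_smul, h]
    | ι w =>
      intro a v h
      have e : v ⊗ₜ[K] (a * RingQuot.mkAlgHom K (SymRel K V) (TensorAlgebra.ι K w))
          = permMul K V (v ⊗ₜ[K] a) (w ⊗ₜ[K] (1 : SymmAlg K V)) := by
        rw [permMul_tmul, mul_one]; rfl
      rw [e, hFmor', hFmor, h, hF1', hF1]
    | mul x y hx hy =>
      intro a v h
      have e : a * RingQuot.mkAlgHom K (SymRel K V) (x * y)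
          = (a * RingQuot.mkAlgHom K (SymRel K V) x) * RingQuot.mkAlgHom K (SymRel K V) y := by
        rw [map_mul, mul_assoc]
      rw [e]
      exact hy _ v (hx a v h)
    | add x y hx hy =>
      intro a v h
      rw [map_add, mul_add, TensorProduct.tmul_add, map_add, map_add, hx a v h, hy a v h]
  have hpure : ∀ (v : V) (ω : SymmAlg K V), F' (v ⊗ₜ[K] ω) = F (v ⊗ₜ[K] ω) := by
    intro v ω
    obtain ⟨x, rfl⟩ := RingQuot.mkAlgHom_surjective K (SymRel K V) ω
    have h1 : F' (v ⊗ₜ[K] (1 : SymmAlg K V)) = F (v ⊗ₜ[K] (1 : SymmAlg K V)) := by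
      rw [hF1', hF1]
    have := hQ x 1 v h1
    simpa [one_mul] using this
  exact TensorProduct.ext' hpure

end Aux2

/-- Proposition 5.1: `V ⊗ S(V)` with the concatenation operation
`(v₁ ⊗ v₂ ∨ … ∨ vₙ) ⊐ (w₁ ⊗ w₂ ∨ … ∨ wₘ) = v₁ ⊗ v₂ ∨ … ∨ vₙ ∨ w₁ ∨ w₂ ∨ … ∨ wₘ`
is the free permutative (Perm-) algebra over `V`. -/
theorem stmt13 (K : Type*) [Field K] [CharZero K] (V : Type*) [AddCommGroup V] [Module K V] :
    ∃ mult : (V ⊗[K] SymmAlg K V) →ₗ[K] (V ⊗[K] SymmAlg K V) →ₗ[K] (V ⊗[K] SymmAlg K V),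
      -- defining formula on generic elements
      (∀ (v w : V) (ω ω' : SymmAlg K V),
        mult (v ⊗ₜ[K] ω) (w ⊗ₜ[K] ω') = v ⊗ₜ[K] (ω * symI K V w * ω')) ∧
      -- it is a Perm-algebra: associative and right-permutative
      (∀ x y z : V ⊗[K] SymmAlg K V, mult (mult x y) z = mult x (mult y z)) ∧
      (∀ x y z : V ⊗[K] SymmAlg K V, mult (mult x y) z = mult (mult x z) y) ∧
      -- freeness: universal property over any Perm-algebra
      (∀ (P : Type*) [AddCommGroup P] [Module K P] (multP : P →ₗ[K] P →ₗ[K] P),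
        (∀ x y z : P, multP (multP x y) z = multP x (multP y z)) →
        (∀ x y z : P, multP (multP x y) z = multP (multP x z) y) →
        ∀ f : V →ₗ[K] P,
          ∃! F : (V ⊗[K] SymmAlg K V) →ₗ[K] P,
            (∀ v : V, F (v ⊗ₜ[K] (1 : SymmAlg K V)) = f v) ∧
            (∀ x y : V ⊗[K] SymmAlg K V, F (mult x y) = multP (F x) (F y))) := by
  refine ⟨permMul K V, fun v w ω ω' => permMul_tmul K V v w ω ω',
    permMul_assoc K V, permMul_perm K V, ?_⟩
  intro P _ _ multP hassoc hperm f
  exact permMul_universal K V P multP hassoc hperm f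
end
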